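/- arXiv:2402.00842 — 6 statements merged into one kernel-verified Lean document; each statement's English description precedes it below -/
import Mathlib

section
/- Let R be a commutative ring and π ∈ R a non-zero-divisor. Let 0 → M₁ → M₂ → M₃ → 0 be a short exact sequence of R-modules such that each Mᵢ has bounded π-torsion (i.e., there exists n such that the π^n-torsion submodule equals the π^m-torsion submodule for all m ≥ n). Then the induced sequence of π-adic completions 0 → lim_n M₁/π^n → lim_n M₂/π^n → lim_n M₃/π^n → 0 is exact. -/
/-- An `R`-module `M` has bounded `π`-torsion if the increasing chain of
`π^n`-torsion submodules stabilizes. -/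
def HasBoundedTorsion (R : Type*) [CommRing R] (π : R) (M : Type*) [AddCommGroup M]
    [Module R M] : Prop :=
  ∃ n : ℕ, ∀ m : ℕ, n ≤ m →
    Submodule.torsionBy R M (π ^ n) = Submodule.torsionBy R M (π ^ m)

lemma mem_span_pow_smul_iff {R : Type*} [CommRing R] (π : R) {M : Type*} [AddCommGroup M]
    [Module R M] (x : M) (n : ℕ) :
    x ∈ ((Ideal.span {π}) ^ n • ⊤ : Submodule R M) ↔ ∃ y : M, π ^ n • y = x := by
  rw [Ideal.span_singleton_pow, Submodule.ideal_span_singleton_smul, ← SetLike.mem_coe,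
    Submodule.coe_pointwise_smul]
  simp [Set.mem_smul_set, eq_comm]

/-- The key Artin–Rees-type lemma: if `M₃` has bounded `π`-torsion (bound `k`), then an element
of `M₁` whose image under `f` lies in `π^(n+k) M₂` lies in `π^n M₁`. -/
lemma key_lemma {R : Type*} [CommRing R] (π : R)
    {M₁ M₂ M₃ : Type*} [AddCommGroup M₁] [Module R M₁] [AddCommGroup M₂] [Module R M₂]
    [AddCommGroup M₃] [Module R M₃]
    {f : M₁ →ₗ[R] M₂} {g : M₂ →ₗ[R] M₃}
    (hf : Function.Injective f) (hfg : Function.Exact f g)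
    {k : ℕ} (hk : ∀ m : ℕ, k ≤ m →
      Submodule.torsionBy R M₃ (π ^ k) = Submodule.torsionBy R M₃ (π ^ m))
    {n : ℕ} {x : M₁} (hx : f x ∈ ((Ideal.span {π}) ^ (n + k) • ⊤ : Submodule R M₂)) :
    x ∈ ((Ideal.span {π}) ^ n • ⊤ : Submodule R M₁) := by
  obtain ⟨y, hy⟩ := (mem_span_pow_smul_iff π _ _).mp hx
  have hgy : π ^ (n + k) • g y = 0 := by
    rw [← map_smul, hy, hfg.apply_apply_eq_zero]
  have hgy' : g y ∈ Submodule.torsionBy R M₃ (π ^ k) := by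
    rw [hk (n + k) (by omega)]
    exact (Submodule.mem_torsionBy_iff _ _).mpr hgy
  have : g (π ^ k • y) = 0 := by
    rw [map_smul]
    exact (Submodule.mem_torsionBy_iff _ _).mp hgy'
  obtain ⟨z, hz⟩ := (hfg _).mp this
  have : f (π ^ n • z) = f x := by
    rw [map_smul, hz, ← hy, smul_smul, ← pow_add]
  exact (mem_span_pow_smul_iff π _ _).mpr ⟨z, hf this⟩

/-- Let `R` be a commutative ring and `π ∈ R` a non-zero-divisor.
Given a short exact sequence `0 → M₁ → M₂ → M₃ → 0` of `R`-modules with bounded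
`π`-torsion, the induced sequence of `π`-adic completions
`0 → lim M₁/π^n → lim M₂/π^n → lim M₃/π^n → 0` is exact. -/
theorem statement0 (R : Type*) [CommRing R] (π : R) (hπ : π ∈ nonZeroDivisors R)
    (M₁ M₂ M₃ : Type*) [AddCommGroup M₁] [Module R M₁] [AddCommGroup M₂] [Module R M₂]
    [AddCommGroup M₃] [Module R M₃]
    (f : M₁ →ₗ[R] M₂) (g : M₂ →ₗ[R] M₃)
    (hf : Function.Injective f) (hfg : Function.Exact f g) (hg : Function.Surjective g)
    (h₁ : HasBoundedTorsion R π M₁) (h₂ : HasBoundedTorsion R π M₂)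
    (h₃ : HasBoundedTorsion R π M₃) :
    Function.Injective (AdicCompletion.map (Ideal.span {π}) f) ∧
    Function.Exact (AdicCompletion.map (Ideal.span {π}) f)
      (AdicCompletion.map (Ideal.span {π}) g) ∧
    Function.Surjective (AdicCompletion.map (Ideal.span {π}) g) := by
  set I := Ideal.span {π} with hI
  obtain ⟨k, hk⟩ := h₃
  refine ⟨?_, ?_, AdicCompletion.map_surjective I hg⟩
  · -- injectivity
    rw [← LinearMap.ker_eq_bot, LinearMap.ker_eq_bot']
    intro x
    apply AdicCompletion.induction_on I M₁ x (fun a ↦ ?_)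
    intro hx
    rw [AdicCompletion.map_mk] at hx
    have hxn : ∀ n : ℕ, f (a n) ∈ (I ^ n • ⊤ : Submodule R M₂) := by
      intro n
      have := congrArg (fun z => z.val n) hx
      simpa [Submodule.Quotient.mk_eq_zero] using this
    refine AdicCompletion.mk_zero_of _ _ _ ⟨0, fun n _ ↦ ⟨n + k, by omega, n, by omega, ?_⟩⟩
    exact key_lemma π hf hfg hk (hxn (n + k))
  · -- exactness
    refine LinearMap.exact_of_comp_eq_zero_of_ker_le_range ?_ (fun y ↦ ?_)
    · rw [AdicCompletion.map_comp, hfg.linearMap_comp_eq_zero, AdicCompletion.map_zero]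
    · apply AdicCompletion.induction_on I M₂ y (fun b ↦ ?_)
      intro hz
      rw [LinearMap.mem_ker, AdicCompletion.map_mk] at hz
      have hb : ∀ n : ℕ, g (b n) ∈ (I ^ n • ⊤ : Submodule R M₃) := by
        intro n
        have := congrArg (fun z => z.val n) hz
        simpa [Submodule.Quotient.mk_eq_zero] using this
      have H : ∀ n : ℕ, ∃ a : M₁, ∃ c : M₂,
          c ∈ (I ^ (n + k) • ⊤ : Submodule R M₂) ∧ f a = b (n + k) - c := by
        intro n
        obtain ⟨t, ht⟩ := (mem_span_pow_smul_iff π _ _).mp (hb (n + k))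
        obtain ⟨s, hs⟩ := hg t
        have hgc : g (b (n + k) - π ^ (n + k) • s) = 0 := by
          rw [map_sub, map_smul, hs, ht, sub_self]
        obtain ⟨a, ha⟩ := (hfg _).mp hgc
        exact ⟨a, π ^ (n + k) • s, (mem_span_pow_smul_iff π _ _).mpr ⟨s, rfl⟩, ha⟩
      choose a c hc hfa using H
      have hsub : ∀ n : ℕ, f (a n) - b n ∈ (I ^ n • ⊤ : Submodule R M₂) := by
        intro n
        rw [hfa n]
        have h1 : b (n + k) - b n ∈ (I ^ n • ⊤ : Submodule R M₂) := by
          have := SModEq.sub_mem.mp (b.property (show n ≤ n + k by omega))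
          simpa using Submodule.neg_mem _ this
        have h2 : c n ∈ (I ^ n • ⊤ : Submodule R M₂) :=
          Submodule.smul_mono_left (Ideal.pow_le_pow_right (by omega)) (hc n)
        have : b (n + k) - c n - b n = (b (n + k) - b n) - c n := by abel
        rw [this]
        exact Submodule.sub_mem _ h1 h2
      have hcauchy : ∀ n : ℕ, a n ≡ a (n + 1) [SMOD (I ^ n • ⊤ : Submodule R M₁)] := by
        intro n
        rw [SModEq.sub_mem]
        have hmem : f (a n - a (n + 1)) ∈ (I ^ (n + k) • ⊤ : Submodule R M₂) := by
          rw [map_sub, hfa n, hfa (n + 1)]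
          have h1 : b (n + k) - b (n + 1 + k) ∈ (I ^ (n + k) • ⊤ : Submodule R M₂) :=
            SModEq.sub_mem.mp (b.property (show n + k ≤ n + 1 + k by omega))
          have h2 : c (n + 1) ∈ (I ^ (n + k) • ⊤ : Submodule R M₂) :=
            Submodule.smul_mono_left (Ideal.pow_le_pow_right (by omega)) (hc (n + 1))
          have heq : b (n + k) - c n - (b (n + 1 + k) - c (n + 1)) =
              (b (n + k) - b (n + 1 + k)) + c (n + 1) - c n := by abel
          rw [heq]
          exact Submodule.sub_mem _ (Submodule.add_mem _ h1 h2) (hc n)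
        exact key_lemma π hf hfg hk hmem
      refine ⟨AdicCompletion.mk I M₁ (AdicCompletion.AdicCauchySequence.mk I M₁ a hcauchy), ?_⟩
      rw [AdicCompletion.map_mk]
      ext n
      simp only [AdicCompletion.mk_apply_coe, Submodule.mkQ_apply,
        AdicCompletion.AdicCauchySequence.map_apply_coe]
      rw [Submodule.Quotient.eq]
      simpa using hsub n
end

section
/- Let R be a commutative ring, π ∈ R a non-zero-divisor, and C• a cochain complex of R-modules each of which has bounded π-torsion. Fix i ∈ ℤ and assume that H^i(C•) and H^{i+1}(C•) have bounded π-torsion. Then the natural map gives an isomorphism H^i(lim_n C•/π^n) ≅ lim_n H^i(C•)/π^n between the i-th cohomology of the degreewise π-adic completion of C• and the π-adic completion of H^i(C•). -/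
/-- The cohomology of a cochain complex `(C, d)` at the spot `j + 1`:
`ker (d (j+1)) / im (d j)`. -/
abbrev CohomologyAt {R : Type*} [CommRing R] {C : ℤ → Type*} [∀ i, AddCommGroup (C i)]
    [∀ i, Module R (C i)] (d : ∀ i, C i →ₗ[R] C (i + 1)) (j : ℤ) : Type _ :=
  ↥(LinearMap.ker (d (j + 1))) ⧸
    Submodule.comap (LinearMap.ker (d (j + 1))).subtype (LinearMap.range (d j))

/-!
If `M ⧸ S` has bounded `π`-torsion, the `π`-adic topology of `M` restricts to that of `S`
(Artin–Rees: `S ∩ π^(c+n) M ⊆ π^n S`), and this makes `π`-adic completion exact on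
`0 → S → M → M ⧸ S → 0`: a Cauchy sequence `b` killed by the completed projection lifts
termwise as `b n = x n + π^n w n` with `x n ∈ S`, and the bound makes `n ↦ x (c + n)` Cauchy.

For the complex put `Z = ker d_{j+1} ⊇ B = im d_j`. The quotients `C^{j+1}/Z ↪ C^{j+2}`,
`C^{j+2}/im d_{j+1}` (an extension of a submodule of `C^{j+3}` by `H^{j+2}`) and `Z/B` have
bounded torsion, so completing identifies the kernel of the completed `d_{j+1}` with `Ẑ`, the
image of the completed `d_j` with `B̂ ⊆ Ẑ`, and `Ẑ/B̂` with the completion of `Z/B`.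
-/

open LinearMap Submodule

section BoundedTorsion

variable {R : Type*} [CommRing R] {π : R}
variable {M : Type*} [AddCommGroup M] [Module R M]
variable {N : Type*} [AddCommGroup N] [Module R N]
variable {P : Type*} [AddCommGroup P] [Module R P]
variable {f : M →ₗ[R] N} {g : N →ₗ[R] P}

theorem torsionBy_eq_comap_of_injective (hf : Function.Injective f) (a : R) :
    torsionBy R M a = (torsionBy R N a).comap f := by
  ext x
  rw [mem_comap, mem_torsionBy_iff, mem_torsionBy_iff, ← map_smul, ← map_zero f, hf.eq_iff]

theorem HasBoundedTorsion.of_injective (hf : Function.Injective f)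
    (h : HasBoundedTorsion R π N) : HasBoundedTorsion R π M := by
  obtain ⟨n, hn⟩ := h
  exact ⟨n, fun m hm => by
    rw [torsionBy_eq_comap_of_injective hf, torsionBy_eq_comap_of_injective hf, hn m hm]⟩

theorem HasBoundedTorsion.of_exact (hf : Function.Injective f) (hfg : Function.Exact f g)
    (hM : HasBoundedTorsion R π M) (hP : HasBoundedTorsion R π P) :
    HasBoundedTorsion R π N := by
  obtain ⟨a, ha⟩ := hM
  obtain ⟨b, hb⟩ := hP
  refine ⟨a + b, fun m hm => le_antisymm
    (torsionBy_le_torsionBy_of_dvd _ _ (pow_dvd_pow π hm)) fun x hx => ?_⟩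
  rw [mem_torsionBy_iff] at hx ⊢
  have hgx : g x ∈ torsionBy R P (π ^ b) := by
    rw [hb m (by omega), mem_torsionBy_iff, ← map_smul, hx, map_zero]
  obtain ⟨y, hy⟩ := (hfg (π ^ b • x)).mp (by rw [map_smul]; exact hgx)
  have hy' : π ^ a • y = 0 := by
    rw [← mem_torsionBy_iff, ha (m - b) (by omega), mem_torsionBy_iff, ← hf.eq_iff, map_smul,
      hy, smul_smul, ← pow_add, Nat.sub_add_cancel (by omega), hx, map_zero]
  rw [pow_add, ← smul_smul, ← hy, ← map_smul, hy', map_zero]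

theorem hasBoundedTorsion_quotient_range (hfg : g ∘ₗ f = 0)
    (hH : HasBoundedTorsion R π (ker g ⧸ (range f).comap (ker g).subtype))
    (hP : HasBoundedTorsion R π P) : HasBoundedTorsion R π (N ⧸ range f) := by
  have hle : range f ≤ ker g := range_le_ker_iff.mpr hfg
  refine hH.of_exact (f := mapQ _ (range f) (ker g).subtype le_rfl) (g := (range f).liftQ g hle)
    ?_ ?_ hP
  · rw [← ker_eq_bot, ker_mapQ, mkQ_map_self]
  · rw [exact_iff, ker_liftQ, range_mapQ, range_subtype]

/-- An Artin–Rees bound: the `π`-adic topology of `N` restricts along `f` to that of `M`. -/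
def IsArtinRees (π : R) (f : M →ₗ[R] N) : Prop :=
  ∃ c : ℕ, ∀ (n : ℕ) (x : M) (y : N), f x = π ^ (c + n) • y → ∃ z, x = π ^ n • z

theorem isArtinRees_of_injective (hf : Function.Injective f)
    (h : HasBoundedTorsion R π (N ⧸ range f)) : IsArtinRees π f := by
  obtain ⟨c, hc⟩ := h
  refine ⟨c, fun n x y hxy => ?_⟩
  have hy : (range f).mkQ y ∈ torsionBy R (N ⧸ range f) (π ^ c) := by
    rw [hc (c + n) (by omega), mem_torsionBy_iff, ← map_smul, ← hxy, mkQ_apply,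
      Quotient.mk_eq_zero]
    exact mem_range_self f x
  rw [mem_torsionBy_iff, ← map_smul, mkQ_apply, Quotient.mk_eq_zero] at hy
  obtain ⟨z, hz⟩ := hy
  exact ⟨z, hf (by rw [hxy, map_smul, hz, pow_add, mul_smul, smul_comm])⟩

theorem isArtinRees_subtype {S : Submodule R M} (h : HasBoundedTorsion R π (M ⧸ S)) :
    IsArtinRees π S.subtype :=
  isArtinRees_of_injective S.injective_subtype (by rwa [range_subtype])

section AdicCompletion

open AdicCompletion

theorem mem_span_singleton_pow_smul_top_iff (n : ℕ) {x : M} :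
    x ∈ (Ideal.span {π} ^ n • ⊤ : Submodule R M) ↔ ∃ y, x = π ^ n • y := by
  rw [Ideal.span_singleton_pow, ideal_span_singleton_smul, mem_smul_pointwise_iff_exists]
  simp [eq_comm]

theorem IsArtinRees.map_injective (h : IsArtinRees π f) :
    Function.Injective (map (Ideal.span {π}) f) := by
  obtain ⟨c, hc⟩ := h
  refine (injective_iff_map_eq_zero _).mpr fun x hx => ?_
  induction x using AdicCompletion.induction_on with | h a => ?_
  ext n
  have hfa : f (a (c + n)) ∈ (Ideal.span {π} ^ (c + n) • ⊤ : Submodule R N) := by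
    simpa using congrArg (fun x ↦ x.val (c + n)) hx
  obtain ⟨y, hy⟩ := (mem_span_singleton_pow_smul_top_iff _).mp hfa
  obtain ⟨z, hz⟩ := hc n _ y hy
  rw [mk_apply_coe, mkQ_apply, ← AdicCauchySequence.mk_eq_mk (show n ≤ c + n by omega), hz,
    val_zero_apply, Quotient.mk_eq_zero, mem_span_singleton_pow_smul_top_iff]
  exact ⟨z, rfl⟩

theorem IsArtinRees.map_exact (h : IsArtinRees π f) (hfg : Function.Exact f g)
    (hg : Function.Surjective g) :
    Function.Exact (map (Ideal.span {π}) f) (map (Ideal.span {π}) g) := by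
  obtain ⟨c, hc⟩ := h
  refine exact_of_comp_eq_zero_of_ker_le_range ?_ fun y hy => ?_
  · rw [AdicCompletion.map_comp, hfg.linearMap_comp_eq_zero, AdicCompletion.map_zero]
  induction y using AdicCompletion.induction_on with | h b => ?_
  have hlift : ∀ n, ∃ x w, f x + π ^ n • w = b n := by
    intro n
    have hgb : g (b n) ∈ (Ideal.span {π} ^ n • ⊤ : Submodule R P) := by
      simpa using congrArg (fun x ↦ x.val n) hy
    obtain ⟨p, hp⟩ := (mem_span_singleton_pow_smul_top_iff _).mp hgb
    obtain ⟨w, rfl⟩ := hg p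
    obtain ⟨x, hx⟩ := (hfg (b n - π ^ n • w)).mp (by rw [map_sub, map_smul, hp, sub_self])
    exact ⟨x, w, by rw [hx, sub_add_cancel]⟩
  choose x w hxw using hlift
  have hcauchy : ∀ n,
      x (c + n) ≡ x (c + (n + 1)) [SMOD (Ideal.span {π} ^ n • ⊤ : Submodule R M)] := by
    intro n
    obtain ⟨v, hv⟩ := (mem_span_singleton_pow_smul_top_iff _).mp
      (SModEq.sub_mem.mp (b.property (Nat.le_succ (c + n))))
    have hfx : f (x (c + n) - x (c + (n + 1))) =
        π ^ (c + n) • (v - w (c + n) + π • w (c + n + 1)) := by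
      rw [map_sub, eq_sub_of_add_eq (hxw (c + n)), eq_sub_of_add_eq (hxw (c + (n + 1))),
        smul_add, smul_sub, ← hv, smul_smul, ← pow_succ]
      abel
    obtain ⟨z, hz⟩ := hc n _ _ hfx
    rw [SModEq.sub_mem, mem_span_singleton_pow_smul_top_iff]
    exact ⟨z, hz⟩
  refine ⟨AdicCompletion.mk _ M (AdicCauchySequence.mk _ M (fun n => x (c + n)) hcauchy), ?_⟩
  ext n
  simp only [map_mk, mk_apply_coe, AdicCauchySequence.map_apply_coe, AdicCauchySequence.mk_coe]
  rw [mkQ_apply, mkQ_apply, ← AdicCauchySequence.mk_eq_mk (show n ≤ c + n by omega),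
    Submodule.Quotient.eq, ← hxw (c + n), sub_add_cancel_left,
    mem_span_singleton_pow_smul_top_iff]
  exact ⟨-(π ^ c • w (c + n)), by rw [smul_neg, smul_smul, ← pow_add, add_comm]⟩

end AdicCompletion

end BoundedTorsion

section Homology

variable {R : Type*} [Ring R]
variable {A B C K H : Type*} [AddCommGroup A] [Module R A] [AddCommGroup B] [Module R B]
  [AddCommGroup C] [Module R C] [AddCommGroup K] [Module R K] [AddCommGroup H] [Module R H]

noncomputable def kerQuotientRangeEquivOfExact (u : A →ₗ[R] B) (v : B →ₗ[R] C)
    {ι : K →ₗ[R] B} {w : A →ₗ[R] K} {ψ : K →ₗ[R] H} (hι : Function.Injective ι)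
    (hιv : Function.Exact ι v) (hw : ι ∘ₗ w = u) (hwψ : Function.Exact w ψ)
    (hψ : Function.Surjective ψ) :
    (ker v ⧸ (range u).comap (ker v).subtype) ≃ₗ[R] H :=
  let e : K ≃ₗ[R] ker v :=
    (LinearEquiv.ofInjective ι hι).trans (LinearEquiv.ofEq _ _ hιv.linearMap_ker_eq.symm)
  have he : (range w).map (e : K →ₗ[R] ker v) = (range u).comap (ker v).subtype := by
    ext x
    constructor
    · rintro ⟨_, ⟨a, rfl⟩, rfl⟩
      exact ⟨a, (LinearMap.congr_fun hw a).symm⟩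
    · rintro ⟨a, ha⟩
      exact ⟨w a, ⟨a, rfl⟩, Subtype.ext ((LinearMap.congr_fun hw a).trans ha)⟩
  (Quotient.equiv _ _ e he).symm ≪≫ₗ hwψ.linearEquivOfSurjective hψ

end Homology

open AdicCompletion in
theorem statement1_general (R : Type*) [CommRing R] (π : R)
    (C : ℤ → Type*) [∀ i, AddCommGroup (C i)] [∀ i, Module R (C i)]
    (d : ∀ i, C i →ₗ[R] C (i + 1))
    (hdd : ∀ i, (d (i + 1)).comp (d i) = 0)
    (hC : ∀ i, HasBoundedTorsion R π (C i))
    (j : ℤ)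
    (hH : HasBoundedTorsion R π (CohomologyAt d j))
    (hH' : HasBoundedTorsion R π (CohomologyAt d (j + 1))) :
    Nonempty
      (CohomologyAt
          (fun i => (AdicCompletion.map (Ideal.span {π}) (d i)).restrictScalars R) j
        ≃ₗ[R] AdicCompletion (Ideal.span {π}) (CohomologyAt d j)) := by
  set I := Ideal.span {π}
  set Z := ker (d (j + 1))
  set B₀ := (range (d j)).comap Z.subtype
  let δ : C j →ₗ[R] B₀ := ((d j).codRestrict Z fun a =>
    mem_ker.mpr (LinearMap.congr_fun (hdd j) a)).codRestrict B₀ fun a => ⟨a, rfl⟩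
  have hδ : Function.Surjective δ := by
    rintro ⟨z, a, ha⟩
    exact ⟨a, Subtype.ext (Subtype.ext ha)⟩
  let e := Z.liftQ (d (j + 1)) le_rfl
  have he : Function.Injective e := ker_eq_bot.mp (Z.ker_liftQ_eq_bot _ _ le_rfl)
  have hZ : IsArtinRees π Z.subtype := isArtinRees_subtype ((hC (j + 1 + 1)).of_injective he)
  have hB₀ : IsArtinRees π B₀.subtype := isArtinRees_subtype hH
  have he' : IsArtinRees π e := isArtinRees_of_injective he (by
    rw [Z.range_liftQ]
    exact hasBoundedTorsion_quotient_range (hdd (j + 1)) hH' (hC _))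
  have hker : Function.Exact (map I Z.subtype) (map I (d (j + 1))) := by
    rw [← Z.liftQ_mkQ (d (j + 1)) le_rfl, ← AdicCompletion.map_comp,
      he'.map_injective.comp_exact_iff_exact]
    exact hZ.map_exact (exact_subtype_mkQ Z) Z.mkQ_surjective
  have hcoh : Function.Exact (map I (B₀.subtype ∘ₗ δ)) (map I B₀.mkQ) := by
    rw [← AdicCompletion.map_comp, (map_surjective I hδ).comp_exact_iff_exact]
    exact hB₀.map_exact (exact_subtype_mkQ B₀) B₀.mkQ_surjective
  exact ⟨kerQuotientRangeEquivOfExact _ _ (ι := (map I Z.subtype).restrictScalars R)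
    (w := (map I (B₀.subtype ∘ₗ δ)).restrictScalars R)
    (ψ := (map I B₀.mkQ).restrictScalars R)
    hZ.map_injective hker (LinearMap.ext fun x => map_comp_apply I _ _ x) hcoh
    (map_surjective I B₀.mkQ_surjective)⟩

/-- For a cochain complex `C•` of `R`-modules with bounded `π`-torsion
terms, if `H^{j+1}(C•)` and `H^{j+2}(C•)` have bounded `π`-torsion, then the cohomology
of the degreewise `π`-adic completion of `C•` at the spot `j+1` is isomorphic to the
`π`-adic completion of `H^{j+1}(C•)`. -/
theorem statement1 (R : Type*) [CommRing R] (π : R) (hπ : π ∈ nonZeroDivisors R)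
    (C : ℤ → Type*) [∀ i, AddCommGroup (C i)] [∀ i, Module R (C i)]
    (d : ∀ i, C i →ₗ[R] C (i + 1))
    (hdd : ∀ i, (d (i + 1)).comp (d i) = 0)
    (hC : ∀ i, HasBoundedTorsion R π (C i))
    (j : ℤ)
    (hH : HasBoundedTorsion R π (CohomologyAt d j))
    (hH' : HasBoundedTorsion R π (CohomologyAt d (j + 1))) :
    Nonempty
      (CohomologyAt
          (fun i => (AdicCompletion.map (Ideal.span {π}) (d i)).restrictScalars R) j
        ≃ₗ[R] AdicCompletion (Ideal.span {π}) (CohomologyAt d j)) :=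
  statement1_general R π C d hdd hC j hH hH'
end

section
/- Let C• be a bounded cochain complex of flat modules over a commutative ring R such that all cohomology modules H^j(C•) are flat. Then for every R-module M and every i, the natural map H^i(C•) ⊗_R M → H^i(C• ⊗_R M) is an isomorphism. -/
/-!
Write `Zⁱ` and `Bⁱ` for the cocycles and coboundaries. The short exact sequences
`0 → Zⁱ → Cⁱ → Bⁱ⁺¹ → 0` and `0 → Bⁱ → Zⁱ → Hⁱ → 0`, read from the top of the complex
downwards, show that every `Bⁱ` and `Zⁱ` is flat. Since `Tor₁(-, M)` vanishes on a flat module,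
both sequences stay exact after tensoring with `M`; hence `Zⁱ⁺¹ ⊗ M` is the kernel of
`dⁱ⁺¹ ⊗ M` (using that `Bⁱ⁺² ⊗ M → Cⁱ⁺² ⊗ M` is injective), and right exactness of `- ⊗ M`
identifies `Hⁱ⁺¹ ⊗ M` with the quotient of `Zⁱ⁺¹ ⊗ M` by the image of `Cⁱ ⊗ M`.
-/

open TensorProduct

open LinearMap Function

theorem Int.forall_of_forall_ge_of_succ {P : ℤ → Prop} (N : ℤ) (base : ∀ i, N ≤ i → P i)
    (step : ∀ i, P (i + 1) → P i) (i : ℤ) : P i :=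
  Int.inductionOn' i N (base N le_rfl) (fun k hk _ => base (k + 1) (by omega))
    fun k _ hk => step (k - 1) (by rwa [sub_add_cancel])

section Flat

variable {R : Type*} [CommRing R] {M N P : Type*} [AddCommGroup M] [AddCommGroup N]
  [AddCommGroup P] [Module R M] [Module R N] [Module R P]

theorem Submodule.exact_inclusion_mkQ {p q : Submodule R N} (h : p ≤ q) :
    Exact (Submodule.inclusion h) (Submodule.comap q.subtype p).mkQ := by
  rw [exact_iff, Submodule.ker_mkQ, Submodule.range_inclusion]

theorem LinearMap.exact_subtype_ker_rangeRestrict (g : N →ₗ[R] P) :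
    Exact (ker g).subtype g.rangeRestrict := by
  rw [exact_iff, ker_rangeRestrict, Submodule.range_subtype]

theorem LinearMap.exact_codRestrict_mkQ (f : M →ₗ[R] N) (g : N →ₗ[R] P) (hfg : g ∘ₗ f = 0) :
    Exact (f.codRestrict (ker g) fun x => range_le_ker_iff.2 hfg (mem_range_self f x))
      (Submodule.comap (ker g).subtype (range f)).mkQ := by
  rw [exact_iff, Submodule.ker_mkQ, range_codRestrict]

theorem LinearMap.rTensor_injective_of_exact_of_flat [Module.Flat R P] {f : N →ₗ[R] P}
    (hf : Surjective f) {g : M →ₗ[R] N} (hg : Function.Injective g) (H : Exact g f)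
    (A : Type*) [AddCommGroup A] [Module R A] : Function.Injective (g.rTensor A) :=
  (g.lTensor_inj_iff_rTensor_inj A).1 (lTensor_injective_of_exact_of_flat f hf g hg H A)

theorem Module.Flat.left_of_shortExact [Module.Flat R N] [Module.Flat R P] {f : N →ₗ[R] P}
    (hf : Surjective f) {g : M →ₗ[R] N} (hg : Function.Injective g) (H : Exact g f) :
    Module.Flat R M := by
  refine Module.Flat.iff_lTensor_preserves_injective_linearMap.2 fun X X' _ _ _ _ u hu => ?_
  have hmap : Function.Injective ((u.lTensor N) ∘ₗ (g.rTensor X)) :=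
    (Module.Flat.lTensor_preserves_injective_linearMap u hu).comp
      (rTensor_injective_of_exact_of_flat hf hg H X)
  rw [lTensor_comp_rTensor, ← rTensor_comp_lTensor, coe_comp] at hmap
  exact hmap.of_comp

theorem Module.Flat.ker_of_flat_range [Module.Flat R N] (f : N →ₗ[R] P)
    [Module.Flat R (range f)] : Module.Flat R (ker f) :=
  Module.Flat.left_of_shortExact f.surjective_rangeRestrict (ker f).injective_subtype
    (exact_subtype_ker_rangeRestrict f)

end Flat

namespace LinearMap

variable {R : Type*} [CommRing R] {M N P : Type*} [AddCommGroup M] [AddCommGroup N]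
  [AddCommGroup P] [Module R M] [Module R N] [Module R P] {f : M →ₗ[R] N} {g : N →ₗ[R] P}
  (A : Type*) [AddCommGroup A] [Module R A]

theorem range_rTensor_subtype_ker (hι : Function.Injective ((range g).subtype.rTensor A)) :
    range ((ker g).subtype.rTensor A) = ker (g.rTensor A) := by
  have hg : g.rTensor A = (range g).subtype.rTensor A ∘ₗ g.rangeRestrict.rTensor A := by
    rw [← rTensor_comp]
    rfl
  rw [hg, ker_comp_of_ker_eq_bot _ (ker_eq_bot.2 hι)]
  exact (exact_iff.1 (rTensor_exact A (exact_subtype_ker_rangeRestrict g)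
    g.surjective_rangeRestrict)).symm

noncomputable def kerRTensorEquiv [Module.Flat R (range g)]
    (hι : Function.Injective ((range g).subtype.rTensor A)) :
    ker g ⊗[R] A ≃ₗ[R] ker (g.rTensor A) :=
  (LinearEquiv.ofInjective _ (rTensor_injective_of_exact_of_flat g.surjective_rangeRestrict
    (ker g).injective_subtype (exact_subtype_ker_rangeRestrict g) A)).trans
    (LinearEquiv.ofEq _ _ (range_rTensor_subtype_ker A hι))

theorem coe_kerRTensorEquiv_apply [Module.Flat R (range g)]
    (hι : Function.Injective ((range g).subtype.rTensor A)) (x : ker g ⊗[R] A) :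
    (kerRTensorEquiv A hι x : N ⊗[R] A) = (ker g).subtype.rTensor A x :=
  rfl

noncomputable def homologyRTensorEquiv (hfg : g ∘ₗ f = 0) [Module.Flat R (range g)]
    (hι : Function.Injective ((range g).subtype.rTensor A)) :
    (ker g ⧸ Submodule.comap (ker g).subtype (range f)) ⊗[R] A ≃ₗ[R]
      ker (g.rTensor A) ⧸ Submodule.comap (ker (g.rTensor A)).subtype (range (f.rTensor A)) :=
  (rTensor.equiv A (exact_codRestrict_mkQ f g hfg) (Submodule.mkQ_surjective _)).symm.trans <|
    Submodule.Quotient.equiv _ _ (kerRTensorEquiv A hι) <| by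
      have hfg' : g.rTensor A ∘ₗ f.rTensor A = 0 := by rw [← rTensor_comp, hfg, rTensor_zero]
      rw [← range_comp,
        ← range_codRestrict _ _ fun x => range_le_ker_iff.2 hfg' (mem_range_self _ x)]
      congr 1
      refine LinearMap.ext fun x => Subtype.ext ?_
      rw [LinearMap.comp_apply, LinearEquiv.coe_coe, coe_kerRTensorEquiv_apply,
        ← LinearMap.comp_apply, ← rTensor_comp, subtype_comp_codRestrict]
      rfl

end LinearMap

section CochainComplex

variable {R : Type*} [CommRing R] {C : ℤ → Type*} [∀ i, AddCommGroup (C i)]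
  [∀ i, Module R (C i)] {d : ∀ i, C i →ₗ[R] C (i + 1)}

theorem flat_range_of_bounded_above (hdd : ∀ i, (d (i + 1)).comp (d i) = 0)
    [∀ i, Module.Flat R (C i)] [∀ j, Module.Flat R (CohomologyAt d j)] (N : ℤ)
    (hN : ∀ i, N < i → Subsingleton (C i)) (i : ℤ) : Module.Flat R (range (d i)) := by
  refine Int.forall_of_forall_ge_of_succ (P := fun i => Module.Flat R (range (d i))) N
    (fun i hi => ?_) (fun i hi => ?_) i
  · have := hN (i + 1) (by omega)
    infer_instance
  · have := Module.Flat.ker_of_flat_range (d (i + 1))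
    exact Module.Flat.left_of_shortExact (Submodule.mkQ_surjective _)
      (Submodule.inclusion_injective _)
      (Submodule.exact_inclusion_mkQ (range_le_ker_iff.2 (hdd i)))

theorem rTensor_subtype_range_injective (hdd : ∀ i, (d (i + 1)).comp (d i) = 0)
    [∀ j, Module.Flat R (CohomologyAt d j)] [∀ i, Module.Flat R (range (d i))]
    (M : Type*) [AddCommGroup M] [Module R M] (i : ℤ) :
    Function.Injective ((range (d i)).subtype.rTensor M) := by
  have hle := range_le_ker_iff.2 (hdd i)
  rw [← Submodule.subtype_comp_inclusion _ _ hle, rTensor_comp, coe_comp]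
  exact (rTensor_injective_of_exact_of_flat (d (i + 1)).surjective_rangeRestrict
    (ker _).injective_subtype (exact_subtype_ker_rangeRestrict _) M).comp
    (rTensor_injective_of_exact_of_flat (Submodule.mkQ_surjective _)
      (Submodule.inclusion_injective _) (Submodule.exact_inclusion_mkQ hle) M)

end CochainComplex

/-- Let `C•` be a bounded cochain complex of flat modules over a
commutative ring `R` whose cohomology modules are all flat.  Then for every `R`-module
`M` and every spot, the natural comparison between `H^{j+1}(C•) ⊗_R M` and
`H^{j+1}(C• ⊗_R M)` is an isomorphism. -/
theorem statement4 (R : Type*) [CommRing R]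
    (C : ℤ → Type*) [∀ i, AddCommGroup (C i)] [∀ i, Module R (C i)]
    (d : ∀ i, C i →ₗ[R] C (i + 1))
    (hdd : ∀ i, (d (i + 1)).comp (d i) = 0)
    (hbounded : ∃ N : ℕ, ∀ i : ℤ, ((i : ℤ) < -(N : ℤ) ∨ (N : ℤ) < i) → Subsingleton (C i))
    (hflatC : ∀ i, Module.Flat R (C i))
    (hflatH : ∀ j : ℤ, Module.Flat R (CohomologyAt d j))
    (M : Type*) [AddCommGroup M] [Module R M] (j : ℤ) :
    Nonempty
      (CohomologyAt d j ⊗[R] M ≃ₗ[R]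
        CohomologyAt (fun i => LinearMap.rTensor M (d i)) j) := by
  obtain ⟨N, hN⟩ := hbounded
  have := flat_range_of_bounded_above hdd N fun i hi => hN i (Or.inr hi)
  exact ⟨homologyRTensorEquiv M (hdd j) (rTensor_subtype_range_injective hdd M (j + 1))⟩
end

section
/- Let A → B be a module-split ring homomorphism of commutative rings, and let C• be a bounded complex of A-modules. If for the complex C• ⊗_A B the formation of cycles, boundaries, and cohomology commutes with the base change (i.e., the natural maps ker(d^i) ⊗_A B → ker(d^i ⊗ B), im(d^{i-1}) ⊗_A B → im(d^{i-1} ⊗ B), and H^i(C•) ⊗_A B → H^i(C• ⊗_A B) are isomorphisms), and B → B' is a further injection of A-algebras detected by the splitting, then injectivity over B' of all the comparison maps for cycles and boundaries implies the corresponding injectivity over B. -/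
open TensorProduct

lemma transfer_inj (A B : Type) [CommRing A] [CommRing B] [Algebra A B]
    (B' : Type) [CommRing B'] [Algebra A B'] [Algebra B B'] [IsScalarTower A B B']
    (r' : B' →ₗ[B] B) (hr' : r' 1 = 1)
    {M N : Type} [AddCommGroup M] [Module A M] [AddCommGroup N] [Module A N]
    (f : M →ₗ[A] N) (hf : Function.Injective (LinearMap.rTensor B' f)) :
    Function.Injective (LinearMap.rTensor B f) := by
  set ι : B →ₗ[A] B' := ((Algebra.linearMap B B').restrictScalars A)
  set ρ : B' →ₗ[A] B := r'.restrictScalars A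
  have hretr : ρ.comp ι = LinearMap.id := by
    ext b
    show r' (algebraMap B B' b) = b
    have h1 : algebraMap B B' b = b • (1 : B') := by
      rw [Algebra.smul_def, mul_one]
    rw [h1, map_smul, hr', smul_eq_mul, mul_one]
  -- lTensor N ι is injective (split)
  have hsplit : ∀ (P : Type) [AddCommGroup P] [Module A P],
      Function.Injective (LinearMap.lTensor P ι) := by
    intro P _ _
    have : (LinearMap.lTensor P ρ).comp (LinearMap.lTensor P ι) = LinearMap.id := by
      rw [← LinearMap.lTensor_comp, hretr, LinearMap.lTensor_id]
    have h2 : Function.LeftInverse (LinearMap.lTensor P ρ) (LinearMap.lTensor P ι) := by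
      intro x
      rw [← LinearMap.comp_apply, this, LinearMap.id_apply]
    exact h2.injective
  have hcomm : (LinearMap.rTensor B' f).comp (LinearMap.lTensor M ι)
      = (LinearMap.lTensor N ι).comp (LinearMap.rTensor B f) := by
    rw [LinearMap.rTensor_comp_lTensor, LinearMap.lTensor_comp_rTensor]
  intro x y hxy
  apply hsplit M
  apply hf
  rw [← LinearMap.comp_apply, ← LinearMap.comp_apply, hcomm]
  simp only [LinearMap.comp_apply, hxy]

/-- Let `A → B` be a module-split ring homomorphism, `C•` a bounded
complex of `A`-modules, and `B → B'` a further injective, module-split map of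
`A`-algebras.  If the natural comparison maps for cycles and boundaries,
`ker(d^i) ⊗_A B' → C^i ⊗_A B'` and `im(d^i) ⊗_A B' → C^{i+1} ⊗_A B'` (whose images are
the cycles resp. boundaries of `C• ⊗_A B'`), are injective, then so are the
corresponding comparison maps over `B`. -/
theorem statement13 (A B : Type) [CommRing A] [CommRing B] [Algebra A B]
    (r : B →ₗ[A] A) (hr : r 1 = 1)
    (B' : Type) [CommRing B'] [Algebra A B'] [Algebra B B'] [IsScalarTower A B B']
    (hinj : Function.Injective (algebraMap B B'))
    (r' : B' →ₗ[B] B) (hr' : r' 1 = 1)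
    (C : ℤ → Type) [∀ i, AddCommGroup (C i)] [∀ i, Module A (C i)]
    (d : ∀ i, C i →ₗ[A] C (i + 1))
    (hdd : ∀ i, (d (i + 1)).comp (d i) = 0)
    (hbounded : ∃ N : ℕ, ∀ i : ℤ, (i < -(N : ℤ) ∨ (N : ℤ) < i) → Subsingleton (C i))
    (hcycles' : ∀ i, Function.Injective
      (LinearMap.rTensor B' (LinearMap.ker (d i)).subtype))
    (hboundaries' : ∀ i, Function.Injective
      (LinearMap.rTensor B' (LinearMap.range (d i)).subtype)) :
    (∀ i, Function.Injective (LinearMap.rTensor B (LinearMap.ker (d i)).subtype)) ∧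
    (∀ i, Function.Injective (LinearMap.rTensor B (LinearMap.range (d i)).subtype)) := by
  exact ⟨fun i => transfer_inj A B B' r' hr' _ (hcycles' i),
    fun i => transfer_inj A B B' r' hr' _ (hboundaries' i)⟩
end

section
/- Let R be a ring, π a non-zero-divisor in R, and M a finitely presented R-module where R is Noetherian (or of topologically finite presentation over a valuation ring of rank 1). Then M has bounded π-torsion: there exists n ∈ ℕ such that M[π^n] = M[π^m] for all m ≥ n. -/
/-- Over a Noetherian ring `R`, any finitely presented module `M`
has bounded `π`-torsion for a non-zero-divisor `π`: there is `n` such that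
`M[π^n] = M[π^m]` for all `m ≥ n`. -/
theorem statement14 (R : Type) [CommRing R] [IsNoetherianRing R]
    (π : R) (hπ : π ∈ nonZeroDivisors R)
    (M : Type) [AddCommGroup M] [Module R M] [Module.FinitePresentation R M] :
    ∃ n : ℕ, ∀ m : ℕ, n ≤ m →
      Submodule.torsionBy R M (π ^ n) = Submodule.torsionBy R M (π ^ m) := by
  have hN : IsNoetherian R M := isNoetherian_of_isNoetherianRing_of_finite R M
  have hmono : Monotone (fun k : ℕ => Submodule.torsionBy R M (π ^ k)) := by
    intro a b hab
    intro x hx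
    simp only [Submodule.mem_torsionBy_iff] at hx ⊢
    calc π ^ b • x = π ^ (b - a) • π ^ a • x := by
          rw [← mul_smul, ← pow_add, Nat.sub_add_cancel hab]
      _ = 0 := by rw [hx, smul_zero]
  obtain ⟨n, hn⟩ := monotone_stabilizes_iff_noetherian.mpr hN ⟨_, hmono⟩
  exact ⟨n, fun m hm => hn m hm⟩
end

section
/- Let A be a commutative ring, C a field, s : A → C a ring homomorphism, and P• a bounded complex of finite free A-modules. Then dim_C H^i(P• ⊗_A C) is an upper semicontinuous function of s in the following sense: if dim_C H^i(P• ⊗_A C) ≤ r at s, then there is an element a ∈ A with s(a) ≠ 0 such that dim_{C'} H^i(P• ⊗_A C') ≤ r for every ring homomorphism s' : A → C' to a field with s'(a) ≠ 0. -/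
open TensorProduct

/-- The dimension of the cohomology at the spot `j + 1` of the base change of a complex
of `A`-modules along a field-valued point `s : A → C`. -/
noncomputable def fiberCohomDim (A : Type) [CommRing A]
    (P : ℤ → Type) [∀ i, AddCommGroup (P i)] [∀ i, Module A (P i)]
    (d : ∀ i, P i →ₗ[A] P (i + 1)) (j : ℤ)
    (Cf : Type) [Field Cf] (s : A →+* Cf) : ℕ :=
  letI := s.toAlgebra
  Module.finrank Cf (CohomologyAt (fun k => (d k).baseChange Cf) j)


/-!
Over a field, `dim H^{j+1} = rank P^{j+1} - rank d^{j+1} - rank d^j`, where the ranks are those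
of the matrices of the differentials specialized along the point. A rank of at least `k` is
witnessed by a nonzero `k × k` minor, and a minor that does not vanish at `s'` keeps the rank at
`s'` at least `k`. Taking `a` to be the product of two maximal minors that survive at `s`, both
ranks can only go up at points where `a` does not vanish, so the dimension can only go down.
-/

namespace Matrix

variable {K : Type*} [Field K] {m n : Type*} [Fintype n]

lemma exists_linearIndependent_col_of_le_rank (M : Matrix m n K) {k : ℕ} (hk : k ≤ M.rank) :
    ∃ c : Fin k → n, LinearIndependent K (M.col ∘ c) := by
  obtain ⟨κ, a, ha, hspan, hli⟩ := exists_linearIndependent' K M.col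
  have : Fintype κ := Fintype.ofInjective a ha
  have hcard : Fintype.card κ = M.rank := by
    rw [rank_eq_finrank_span_cols, ← hspan, finrank_span_eq_card hli]
  obtain ⟨e⟩ := Function.Embedding.nonempty_of_card_le (α := Fin k) (β := κ) (by simpa [hcard])
  exact ⟨a ∘ e, hli.comp e e.injective⟩

lemma le_rank_iff_exists_submatrix_det_ne_zero [Fintype m] (M : Matrix m n K) {k : ℕ} :
    k ≤ M.rank ↔ ∃ (f : Fin k → m) (g : Fin k → n), (M.submatrix f g).det ≠ 0 := by
  constructor
  · intro hk
    obtain ⟨g, hg⟩ := M.exists_linearIndependent_col_of_le_rank hk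
    have hrank : (M.submatrix id g)ᵀ.rank = k := by
      simpa using LinearIndependent.rank_matrix (M := (M.submatrix id g)ᵀ) hg
    obtain ⟨f, hf⟩ := (M.submatrix id g)ᵀ.exists_linearIndependent_col_of_le_rank hrank.ge
    refine ⟨f, g, ?_⟩
    rw [← isUnit_iff_ne_zero, ← isUnit_iff_isUnit_det, ← linearIndependent_rows_iff_isUnit]
    exact hf
  · rintro ⟨f, g, hdet⟩
    classical
    calc k = (M.submatrix f g).rank := by
          rw [rank_of_isUnit _ ((isUnit_iff_isUnit_det _).mpr hdet.isUnit), Fintype.card_fin]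
      _ ≤ M.rank := M.rank_submatrix_le f g

lemma exists_ne_zero_forall_rank_map_le {A : Type*} [CommRing A] [Fintype m] (M : Matrix m n A)
    (s : A →+* K) :
    ∃ a : A, s a ≠ 0 ∧ ∀ (K' : Type*) [Field K'] (s' : A →+* K'), s' a ≠ 0 →
      (M.map s).rank ≤ (M.map s').rank := by
  obtain ⟨f, g, hdet⟩ := (M.map s).le_rank_iff_exists_submatrix_det_ne_zero.mp le_rfl
  refine ⟨(M.submatrix f g).det, by rwa [RingHom.map_det], fun K' _ s' ha => ?_⟩
  rw [RingHom.map_det] at ha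
  exact (M.map s').le_rank_iff_exists_submatrix_det_ne_zero.mpr ⟨f, g, ha⟩

end Matrix

open Module

lemma CohomologyAt.finrank_add_finrank_range_add_finrank_range {K : Type*} [Field K]
    {C : ℤ → Type*} [∀ i, AddCommGroup (C i)] [∀ i, Module K (C i)]
    (d : ∀ i, C i →ₗ[K] C (i + 1)) (j : ℤ) (hdd : (d (j + 1)).comp (d j) = 0)
    [FiniteDimensional K (C (j + 1))] :
    finrank K (CohomologyAt d j) + finrank K (LinearMap.range (d (j + 1)))
      + finrank K (LinearMap.range (d j)) = finrank K (C (j + 1)) := by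
  have hle : LinearMap.range (d j) ≤ LinearMap.ker (d (j + 1)) :=
    LinearMap.range_le_ker_iff.mpr hdd
  have hquot := Submodule.finrank_quotient_add_finrank
    (Submodule.comap (LinearMap.ker (d (j + 1))).subtype (LinearMap.range (d j)))
  have hcomap := (Submodule.comapSubtypeEquivOfLe hle).finrank_eq
  have hker := LinearMap.finrank_range_add_finrank_ker (d (j + 1))
  unfold CohomologyAt
  omega

lemma LinearMap.finrank_range_baseChange {R K M N ι κ : Type*} [CommRing R] [Field K]
    [Algebra R K] [AddCommGroup M] [Module R M] [AddCommGroup N] [Module R N]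
    [Fintype ι] [Fintype κ] [DecidableEq ι] (b : Basis ι R M) (c : Basis κ R N)
    (f : M →ₗ[R] N) :
    finrank K (LinearMap.range (f.baseChange K)) =
      ((toMatrix b c f).map (algebraMap R K)).rank := by
  rw [← toMatrix_baseChange, Matrix.rank_eq_finrank_range_toLin _
    (Algebra.TensorProduct.basis K c) (Algebra.TensorProduct.basis K b), Matrix.toLin_toMatrix]

lemma fiberCohomDim_add_rank_add_rank (A : Type) [CommRing A]
    (P : ℤ → Type) [∀ i, AddCommGroup (P i)] [∀ i, Module A (P i)]
    (d : ∀ i, P i →ₗ[A] P (i + 1)) (j : ℤ) (hdd : (d (j + 1)).comp (d j) = 0)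
    {ι₀ ι₁ ι₂ : Type} [Fintype ι₀] [Fintype ι₁] [Fintype ι₂] [DecidableEq ι₀] [DecidableEq ι₁]
    (b₀ : Basis ι₀ A (P j)) (b₁ : Basis ι₁ A (P (j + 1))) (b₂ : Basis ι₂ A (P (j + 1 + 1)))
    (Cf : Type) [Field Cf] (s : A →+* Cf) :
    fiberCohomDim A P d j Cf s + ((LinearMap.toMatrix b₁ b₂ (d (j + 1))).map s).rank
      + ((LinearMap.toMatrix b₀ b₁ (d j)).map s).rank = Fintype.card ι₁ := by
  let := s.toAlgebra
  change finrank Cf (CohomologyAt (fun k => (d k).baseChange Cf) j) + _ + _ = _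
  have hdd' : ((d (j + 1)).baseChange Cf).comp ((d j).baseChange Cf) = 0 := by
    rw [← LinearMap.baseChange_comp, hdd, LinearMap.baseChange_zero]
  have := Module.Finite.of_basis (Algebra.TensorProduct.basis Cf b₁)
  rw [← RingHom.algebraMap_toAlgebra s, ← LinearMap.finrank_range_baseChange b₁ b₂,
    ← LinearMap.finrank_range_baseChange b₀ b₁,
    ← finrank_eq_card_basis (Algebra.TensorProduct.basis Cf b₁)]
  exact CohomologyAt.finrank_add_finrank_range_add_finrank_range _ j hdd'

theorem statement18_general (A : Type) [CommRing A]
    (P : ℤ → Type) [∀ i, AddCommGroup (P i)] [∀ i, Module A (P i)]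
    [∀ i, Module.Free A (P i)] [∀ i, Module.Finite A (P i)]
    (d : ∀ i, P i →ₗ[A] P (i + 1))
    (hdd : ∀ i, (d (i + 1)).comp (d i) = 0)
    (j : ℤ) (r : ℕ)
    (Cf : Type) [Field Cf] (s : A →+* Cf)
    (hs : fiberCohomDim A P d j Cf s ≤ r) :
    ∃ a : A, s a ≠ 0 ∧
      ∀ (Cf' : Type) [Field Cf'] (s' : A →+* Cf'), s' a ≠ 0 →
        fiberCohomDim A P d j Cf' s' ≤ r := by
  classical
  let b₀ := Free.chooseBasis A (P j)
  let b₁ := Free.chooseBasis A (P (j + 1))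
  let b₂ := Free.chooseBasis A (P (j + 1 + 1))
  obtain ⟨a₀, ha₀, h₀⟩ := (LinearMap.toMatrix b₀ b₁ (d j)).exists_ne_zero_forall_rank_map_le s
  obtain ⟨a₁, ha₁, h₁⟩ :=
    (LinearMap.toMatrix b₁ b₂ (d (j + 1))).exists_ne_zero_forall_rank_map_le s
  refine ⟨a₀ * a₁, by rw [map_mul]; exact mul_ne_zero ha₀ ha₁, fun Cf' _ s' ha => ?_⟩
  rw [map_mul, mul_ne_zero_iff] at ha
  have hdim := fiberCohomDim_add_rank_add_rank A P d j (hdd j) b₀ b₁ b₂ Cf s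
  have hdim' := fiberCohomDim_add_rank_add_rank A P d j (hdd j) b₀ b₁ b₂ Cf' s'
  have hrank₀ := h₀ Cf' s' ha.1
  have hrank₁ := h₁ Cf' s' ha.2
  omega

/-- upper semicontinuity of fiberwise cohomological dimension.
Let `P•` be a bounded complex of finite free `A`-modules and `s : A → C` a point with
values in a field.  If `dim_C H^i(P• ⊗_A C) ≤ r` at `s`, then there is `a ∈ A` with
`s(a) ≠ 0` such that `dim_{C'} H^i(P• ⊗_A C') ≤ r` for every field-valued point
`s' : A → C'` with `s'(a) ≠ 0`. -/
theorem statement18 (A : Type) [CommRing A]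
    (P : ℤ → Type) [∀ i, AddCommGroup (P i)] [∀ i, Module A (P i)]
    [∀ i, Module.Free A (P i)] [∀ i, Module.Finite A (P i)]
    (d : ∀ i, P i →ₗ[A] P (i + 1))
    (hdd : ∀ i, (d (i + 1)).comp (d i) = 0)
    (hbounded : ∃ N : ℕ, ∀ i : ℤ, (i < -(N : ℤ) ∨ (N : ℤ) < i) → Subsingleton (P i))
    (j : ℤ) (r : ℕ)
    (Cf : Type) [Field Cf] (s : A →+* Cf)
    (hs : fiberCohomDim A P d j Cf s ≤ r) :
    ∃ a : A, s a ≠ 0 ∧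
      ∀ (Cf' : Type) [Field Cf'] (s' : A →+* Cf'), s' a ≠ 0 →
        fiberCohomDim A P d j Cf' s' ≤ r :=
  statement18_general A P d hdd j r Cf s hs
end
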